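/- arXiv:1403.5653 — 4 statements merged into one kernel-verified Lean document; each statement's English description precedes it below -/
import Mathlib

section
/- Let v₁, v₂ : ℝ³ → ℝ be continuous bounded functions with ∫_{ℝ³} |v₂(x) − v₁(x)| dx < ∞. Let L = max( max(1, sup v₁ − 1), max(1, sup v₂ − 1) ) and let ψ : ℝ → ℝ be a C¹ function with compact support contained in (L, ∞). Then ∫_{ℝ³}∫_{ℝ³} [ ψ(v₂(x) + ⟨ξ⟩) − ψ(v₁(x) + ⟨ξ⟩) + ψ(v₂(x) − ⟨ξ⟩) − ψ(v₁(x) − ⟨ξ⟩) ] dξ dx = ∫_{ℝ³} ∫_{ℝ} ψ(E) [ φ(E − v₂(x)) − φ(E − v₁(x)) ] dE dx, where ⟨ξ⟩ = (1 + ‖ξ‖²)^{1/2} and φ(s) = 4π s ((s² − 1)₊)^{1/2}, all integrals being absolutely convergent. -/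
/-!
Polar coordinates and the substitution `s = √(1 + r²)` give, on `ℝ³`,
`∫ f(√(1 + ‖ξ‖²)) dξ = ∫ f(s) φ(s) ds` whenever `f` vanishes on `(-∞, -1]`. On `supp ψ` we have
`E > L ≥ v_j(x) - 1`, so the negative branches `ψ(v_j(x) - ⟨ξ⟩)` vanish identically and, after a
shift by `v_j(x)`, the positive ones give `∫ ψ(E) φ(E - v_j(x)) dE`.

For integrability: `ψ` is Lipschitz, so the phase-space integrand is at most `K |v₂ - v₁|` on a
fixed ball in `ξ` and zero outside it. As `φ` is monotone on `[-1, ∞)`,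
`|ψ(E)| |φ(E - v₂) - φ(E - v₁)|` is a signed difference of two terms to which the identity
applies with `|ψ|`, which bounds the right-hand integrand by the left-hand one.
-/

open MeasureTheory Real Set Metric Function

local notation "ℝ³" => EuclideanSpace ℝ (Fin 3)

section SqrtOneAddNormSq

variable {F : Type*} [NormedAddCommGroup F]

lemma norm_le_sqrt_one_add_norm_sq (ξ : F) : ‖ξ‖ ≤ √(1 + ‖ξ‖ ^ 2) :=
  le_sqrt_of_sq_le (by linarith)

lemma one_le_sqrt_one_add_norm_sq (ξ : F) : 1 ≤ √(1 + ‖ξ‖ ^ 2) :=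
  one_le_sqrt.2 (by nlinarith [norm_nonneg ξ])

lemma comp_sub_sqrt_one_add_norm_sq_eq_zero {g : ℝ → ℝ} {v : ℝ}
    (hg : support g ⊆ Ioi (v - 1)) (ξ : F) : g (v - √(1 + ‖ξ‖ ^ 2)) = 0 :=
  notMem_support.1 fun h =>
    (mem_Ioi.1 (hg h)).not_ge (by linarith [one_le_sqrt_one_add_norm_sq ξ])

lemma comp_add_sqrt_one_add_norm_sq_eq_zero {g : ℝ → ℝ} {M a : ℝ} (hg : support g ⊆ Iic M)
    {ξ : F} (hξ : M - a < ‖ξ‖) : g (a + √(1 + ‖ξ‖ ^ 2)) = 0 :=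
  notMem_support.1 fun h =>
    (mem_Iic.1 (hg h)).not_gt (by linarith [norm_le_sqrt_one_add_norm_sq ξ])

lemma HasCompactSupport.comp_add_sqrt_one_add_norm_sq [ProperSpace F] {g : ℝ → ℝ}
    (hg : HasCompactSupport g) (a : ℝ) :
    HasCompactSupport fun ξ : F => g (a + √(1 + ‖ξ‖ ^ 2)) := by
  obtain ⟨M, hM⟩ := hg.isCompact.bddAbove
  refine .intro (isCompact_closedBall 0 (M - a)) fun ξ hξ => ?_
  exact comp_add_sqrt_one_add_norm_sq_eq_zero ((subset_tsupport g).trans hM)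
    (by simpa using hξ)

lemma norm_comp_add_sqrt_one_add_norm_sq_sub_le {g : ℝ → ℝ} {K : NNReal} {M c a b : ℝ}
    (hg : LipschitzWith K g) (hgM : support g ⊆ Iic M) (ha : c ≤ a) (hb : c ≤ b) (ξ : F) :
    ‖g (b + √(1 + ‖ξ‖ ^ 2)) - g (a + √(1 + ‖ξ‖ ^ 2))‖ ≤
      K * ‖b - a‖ * (closedBall 0 (M - c)).indicator 1 ξ := by
  by_cases hξ : ξ ∈ closedBall 0 (M - c)
  · rw [indicator_of_mem hξ, Pi.one_apply, mul_one,
      ← add_sub_add_right_eq_sub b a √(1 + ‖ξ‖ ^ 2)]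
    exact hg.norm_sub_le _ _
  · have hξ : M - c < ‖ξ‖ := by simpa using hξ
    rw [comp_add_sqrt_one_add_norm_sq_eq_zero hgM (by linarith),
      comp_add_sqrt_one_add_norm_sq_eq_zero hgM (by linarith), sub_self, norm_zero]
    exact mul_nonneg (by positivity) (indicator_nonneg (fun _ _ => zero_le_one) _)

variable [MeasurableSpace F] [BorelSpace F] [ProperSpace F] {ν : Measure F}
  [IsFiniteMeasureOnCompacts ν]

lemma integrable_comp_add_sqrt_one_add_norm_sq {g : ℝ → ℝ} (hg : Continuous g)
    (hgs : HasCompactSupport g) (a : ℝ) : Integrable (fun ξ : F => g (a + √(1 + ‖ξ‖ ^ 2))) ν :=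
  (by fun_prop : Continuous _).integrable_of_hasCompactSupport
    (hgs.comp_add_sqrt_one_add_norm_sq a)

lemma integrable_comp_add_sqrt_one_add_norm_sq_sub {X : Type*} [MeasurableSpace X]
    {μ : Measure X} [SFinite μ] {v₁ v₂ : X → ℝ} {g : ℝ → ℝ} {K : NNReal}
    (hv₁ : Measurable v₁) (hv₂ : Measurable v₂) (hb₁ : BddBelow (range v₁))
    (hb₂ : BddBelow (range v₂)) (hint : Integrable (fun x => v₂ x - v₁ x) μ)
    (hg : LipschitzWith K g) (hgs : HasCompactSupport g) :
    Integrable (fun p : X × F => g (v₂ p.1 + √(1 + ‖p.2‖ ^ 2)) - g (v₁ p.1 + √(1 + ‖p.2‖ ^ 2)))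
      (μ.prod ν) := by
  obtain ⟨c₁, hc₁⟩ := hb₁
  obtain ⟨c₂, hc₂⟩ := hb₂
  obtain ⟨M, hM⟩ := hgs.isCompact.bddAbove
  have hball : Integrable ((closedBall (0 : F) (M - min c₁ c₂)).indicator 1) ν :=
    (integrable_indicator_iff measurableSet_closedBall).2
      (integrableOn_const (C := (1 : ℝ)) measure_closedBall_lt_top.ne)
  refine ((hint.norm.const_mul K).mul_prod hball).mono' ?_ (ae_of_all _ fun p => ?_)
  · exact (hg.continuous.measurable.comp (by fun_prop)).sub
      (hg.continuous.measurable.comp (by fun_prop)) |>.aestronglyMeasurable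
  · exact norm_comp_add_sqrt_one_add_norm_sq_sub_le hg ((subset_tsupport g).trans hM)
      ((min_le_left _ _).trans (hc₁ (mem_range_self p.1)))
      ((min_le_right _ _).trans (hc₂ (mem_range_self p.1))) p.2

end SqrtOneAddNormSq

lemma strictMonoOn_sqrt_one_add_sq : StrictMonoOn (fun r : ℝ => √(1 + r ^ 2)) (Ici 0) :=
  fun _ ha _ _ hab => sqrt_lt_sqrt (by positivity) (by gcongr)

lemma image_sqrt_one_add_sq_Ioi_zero : (fun r : ℝ => √(1 + r ^ 2)) '' Ioi 0 = Ioi 1 := by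
  ext s
  constructor
  · rintro ⟨r, hr, rfl⟩
    simpa using strictMonoOn_sqrt_one_add_sq self_mem_Ici (le_of_lt hr : (0:ℝ) ≤ r) hr
  · intro (hs : 1 < s)
    refine ⟨√(s ^ 2 - 1), sqrt_pos.2 (by nlinarith), ?_⟩
    dsimp only
    rw [sq_sqrt (by nlinarith), add_sub_cancel, sqrt_sq (by linarith)]

lemma hasDerivAt_sqrt_one_add_sq (r : ℝ) :
    HasDerivAt (fun r : ℝ => √(1 + r ^ 2)) (r / √(1 + r ^ 2)) r := by
  convert ((hasDerivAt_pow 2 r).const_add 1).sqrt (by positivity) using 1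
  field_simp
  ring

/-- On `(1, ∞)`, `φ` is the density of the push-forward of Lebesgue measure on `ℝ³` under
`ξ ↦ √(1 + ‖ξ‖²)`. -/
noncomputable def diracKernel (s : ℝ) : ℝ := 4 * π * s * √(max (s ^ 2 - 1) 0)

lemma continuous_diracKernel : Continuous diracKernel := by
  unfold diracKernel; fun_prop

lemma diracKernel_eq_zero_of_abs_le_one {s : ℝ} (hs : |s| ≤ 1) : diracKernel s = 0 := by
  have : s ^ 2 ≤ 1 := by nlinarith [abs_le.1 hs, sq_abs s]
  simp [diracKernel, max_eq_right (sub_nonpos.2 this)]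

lemma monotoneOn_diracKernel : MonotoneOn diracKernel (Ici (-1)) := by
  intro a ha b hb hab
  rcases le_or_gt |a| 1 with ha1 | ha1
  · rw [diracKernel_eq_zero_of_abs_le_one ha1]
    rcases le_or_gt |b| 1 with hb1 | hb1
    · rw [diracKernel_eq_zero_of_abs_le_one hb1]
    · have : 0 ≤ b := by cases abs_cases b <;> linarith [mem_Ici.1 hb]
      exact mul_nonneg (mul_nonneg (by positivity) this) (sqrt_nonneg _)
  · have ha0 : 0 ≤ a := by cases abs_cases a <;> linarith [mem_Ici.1 ha]
    unfold diracKernel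
    gcongr
    exact mul_nonneg (by positivity) (ha0.trans hab)

lemma diracKernel_sqrt_one_add_sq {r : ℝ} (hr : 0 ≤ r) :
    diracKernel √(1 + r ^ 2) = 4 * π * √(1 + r ^ 2) * r := by
  rw [diracKernel, sq_sqrt (by positivity), add_sub_cancel_left, max_eq_left (by positivity),
    sqrt_sq hr]

lemma integral_fun_norm_fin_three (f : ℝ → ℝ) :
    ∫ ξ : ℝ³, f ‖ξ‖ = 4 * π * ∫ r in Ioi 0, r ^ 2 * f r := by
  rw [integral_fun_norm_addHaar, finrank_euclideanSpace_fin, measureReal_def,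
    EuclideanSpace.volume_ball_fin_three]
  simp only [ENNReal.ofReal_one, one_pow, one_mul, smul_eq_mul, nsmul_eq_mul]
  rw [ENNReal.toReal_ofReal (by positivity)]
  norm_num
  ring

lemma integral_Ioi_one_mul_diracKernel (f : ℝ → ℝ) :
    ∫ s in Ioi 1, f s * diracKernel s = 4 * π * ∫ r in Ioi 0, r ^ 2 * f √(1 + r ^ 2) := by
  rw [← image_sqrt_one_add_sq_Ioi_zero, integral_image_eq_integral_abs_deriv_smul
    measurableSet_Ioi (fun r _ => (hasDerivAt_sqrt_one_add_sq r).hasDerivWithinAt)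
    (strictMonoOn_sqrt_one_add_sq.mono Ioi_subset_Ici_self).injOn, ← integral_const_mul]
  refine setIntegral_congr_fun measurableSet_Ioi fun r (hr : 0 < r) => ?_
  have hs : 0 < √(1 + r ^ 2) := sqrt_pos.2 (by positivity)
  rw [smul_eq_mul, diracKernel_sqrt_one_add_sq hr.le, abs_of_pos (div_pos hr hs)]
  field_simp

lemma integral_comp_sqrt_one_add_norm_sq {f : ℝ → ℝ} (hf : support f ⊆ Ioi (-1)) :
    ∫ ξ : ℝ³, f √(1 + ‖ξ‖ ^ 2) = ∫ s, f s * diracKernel s := by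
  rw [integral_fun_norm_fin_three (fun r => f √(1 + r ^ 2)), ← integral_Ioi_one_mul_diracKernel]
  refine setIntegral_eq_integral_of_forall_compl_eq_zero fun s (hs : ¬ 1 < s) => ?_
  by_cases hfs : f s = 0
  · rw [hfs, zero_mul]
  · have : -1 < s := hf hfs
    rw [diracKernel_eq_zero_of_abs_le_one (abs_le.2 ⟨this.le, not_lt.1 hs⟩), mul_zero]

lemma integral_comp_add_sqrt_one_add_norm_sq {χ : ℝ → ℝ} {v : ℝ}
    (hχ : support χ ⊆ Ioi (v - 1)) :
    ∫ ξ : ℝ³, χ (v + √(1 + ‖ξ‖ ^ 2)) = ∫ E, χ E * diracKernel (E - v) := by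
  rw [integral_comp_sqrt_one_add_norm_sq (f := fun s => χ (v + s)),
    ← integral_add_right_eq_self (fun E => χ E * diracKernel (E - v)) v]
  · simp only [add_comm, add_sub_cancel_left]
  · intro s hs
    have : v - 1 < v + s := hχ hs
    show -1 < s
    linarith

lemma integrable_mul_diracKernel_sub {ψ : ℝ → ℝ} (hψ : Continuous ψ)
    (hψs : HasCompactSupport ψ) (a : ℝ) : Integrable fun E => ψ E * diracKernel (E - a) :=
  (hψ.mul (continuous_diracKernel.comp (continuous_sub_right a))).integrable_of_hasCompactSupport
    hψs.mul_right

section KernelIdentity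

variable {ψ : ℝ → ℝ} {a b : ℝ}

lemma integral_comp_add_sqrt_one_add_norm_sq_sub (hψ : Continuous ψ)
    (hψs : HasCompactSupport ψ) (ha : support ψ ⊆ Ioi (a - 1)) (hb : support ψ ⊆ Ioi (b - 1)) :
    ∫ ξ : ℝ³, (ψ (b + √(1 + ‖ξ‖ ^ 2)) - ψ (a + √(1 + ‖ξ‖ ^ 2))) =
      ∫ E, ψ E * (diracKernel (E - b) - diracKernel (E - a)) := by
  simp_rw [mul_sub]
  rw [integral_sub (integrable_comp_add_sqrt_one_add_norm_sq hψ hψs b)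
      (integrable_comp_add_sqrt_one_add_norm_sq hψ hψs a),
    integral_sub (integrable_mul_diracKernel_sub hψ hψs b)
      (integrable_mul_diracKernel_sub hψ hψs a),
    integral_comp_add_sqrt_one_add_norm_sq hb, integral_comp_add_sqrt_one_add_norm_sq ha]

lemma integral_norm_mul_diracKernel_sub_le (hψ : Continuous ψ) (hψs : HasCompactSupport ψ)
    (ha : support ψ ⊆ Ioi (a - 1)) (hb : support ψ ⊆ Ioi (b - 1)) :
    ∫ E, ‖ψ E * (diracKernel (E - b) - diracKernel (E - a))‖ ≤
      ∫ ξ : ℝ³, ‖ψ (b + √(1 + ‖ξ‖ ^ 2)) - ψ (a + √(1 + ‖ξ‖ ^ 2))‖ := by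
  wlog hab : a ≤ b generalizing a b
  · simpa only [norm_mul, norm_sub_rev] using this hb ha (le_of_not_ge hab)
  have habs : support (fun E => |ψ E|) = support ψ := support_comp_eq abs (by simp) ψ
  have hmono (E : ℝ) : ‖ψ E * (diracKernel (E - b) - diracKernel (E - a))‖ =
      |ψ E| * diracKernel (E - a) - |ψ E| * diracKernel (E - b) := by
    by_cases hE : ψ E = 0
    · simp [hE]
    have hbE : -1 ≤ E - b := by linarith [mem_Ioi.1 (hb hE)]
    have hφ : diracKernel (E - b) ≤ diracKernel (E - a) :=
      monotoneOn_diracKernel hbE (mem_Ici.2 (by linarith)) (by linarith)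
    rw [norm_mul, Real.norm_eq_abs, Real.norm_eq_abs, abs_of_nonpos (sub_nonpos.2 hφ)]
    ring
  have hXa := integrable_comp_add_sqrt_one_add_norm_sq (ν := volume (α := ℝ³)) hψ.abs hψs.abs a
  have hXb := integrable_comp_add_sqrt_one_add_norm_sq (ν := volume (α := ℝ³)) hψ.abs hψs.abs b
  calc ∫ E, ‖ψ E * (diracKernel (E - b) - diracKernel (E - a))‖
      = (∫ E, |ψ E| * diracKernel (E - a)) - ∫ E, |ψ E| * diracKernel (E - b) := by
        rw [integral_congr_ae (ae_of_all _ hmono), integral_sub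
          (integrable_mul_diracKernel_sub hψ.abs hψs.abs a)
          (integrable_mul_diracKernel_sub hψ.abs hψs.abs b)]
    _ = ∫ ξ : ℝ³, (|ψ (a + √(1 + ‖ξ‖ ^ 2))| - |ψ (b + √(1 + ‖ξ‖ ^ 2))|) := by
        rw [integral_sub hXa hXb,
          integral_comp_add_sqrt_one_add_norm_sq (χ := fun E => |ψ E|) (habs ▸ ha),
          integral_comp_add_sqrt_one_add_norm_sq (χ := fun E => |ψ E|) (habs ▸ hb)]
    _ ≤ ∫ ξ : ℝ³, ‖ψ (b + √(1 + ‖ξ‖ ^ 2)) - ψ (a + √(1 + ‖ξ‖ ^ 2))‖ := by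
        refine integral_mono (hXa.sub hXb)
          ((integrable_comp_add_sqrt_one_add_norm_sq hψ hψs b).sub
            (integrable_comp_add_sqrt_one_add_norm_sq hψ hψs a)).norm fun ξ => ?_
        rw [Real.norm_eq_abs, abs_sub_comm]
        exact abs_sub_abs_le_abs_sub _ _

end KernelIdentity

lemma integrable_prod_mul_diracKernel_sub {X : Type*} [MeasurableSpace X] {μ : Measure X}
    [SFinite μ] {v₁ v₂ : X → ℝ} {ψ : ℝ → ℝ} (hv₁ : Measurable v₁) (hv₂ : Measurable v₂)
    (hψ : Continuous ψ) (hψs : HasCompactSupport ψ) (hs₁ : ∀ x, support ψ ⊆ Ioi (v₁ x - 1))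
    (hs₂ : ∀ x, support ψ ⊆ Ioi (v₂ x - 1))
    (hG : Integrable (fun p : X × ℝ³ =>
      ψ (v₂ p.1 + √(1 + ‖p.2‖ ^ 2)) - ψ (v₁ p.1 + √(1 + ‖p.2‖ ^ 2))) (μ.prod volume)) :
    Integrable
      (fun p : X × ℝ => ψ p.2 * (diracKernel (p.2 - v₂ p.1) - diracKernel (p.2 - v₁ p.1)))
      (μ.prod volume) := by
  have hm : AEStronglyMeasurable
      (fun p : X × ℝ => ψ p.2 * (diracKernel (p.2 - v₂ p.1) - diracKernel (p.2 - v₁ p.1)))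
      (μ.prod volume) := by
    have := continuous_diracKernel.measurable
    exact (by fun_prop : Measurable _).aestronglyMeasurable
  refine (integrable_prod_iff hm).2 ⟨ae_of_all _ fun x => ?_, hG.integral_norm_prod_left.mono'
    hm.norm.integral_prod_right' (ae_of_all _ fun x => ?_)⟩
  · simp only [mul_sub]
    exact (integrable_mul_diracKernel_sub hψ hψs (v₂ x)).sub
      (integrable_mul_diracKernel_sub hψ hψs (v₁ x))
  · rw [norm_of_nonneg (integral_nonneg fun _ => norm_nonneg _)]
    exact integral_norm_mul_diracKernel_sub_le hψ hψs (hs₁ x) (hs₂ x)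

lemma support_subset_Ioi_sub_one_of_iSup_sub_one_le {X : Type*} {v : X → ℝ} {ψ : ℝ → ℝ}
    {L : ℝ} (hv : BddAbove (range v)) (hL : (⨆ x, v x) - 1 ≤ L) (hψ : tsupport ψ ⊆ Ioi L) (x : X) :
    support ψ ⊆ Ioi (v x - 1) :=
  (subset_tsupport ψ).trans (hψ.trans (Ioi_subset_Ioi (by linarith [le_ciSup hv x])))

/-- For continuous bounded `v₁, v₂` with integrable difference and a `C¹` function `ψ`
compactly supported in `(L, ∞)` with `L = max_j max(1, sup v_j − 1)`, the phase-space
integral of `ψ` over the four eigenvalue branches equals the one-dimensional integral of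
`ψ` against the convolution kernel `φ(s) = 4π s ((s² − 1)₊)^{1/2}`, all integrals being
absolutely convergent. -/
theorem stmt_6 (v₁ v₂ : EuclideanSpace ℝ (Fin 3) → ℝ)
    (hc₁ : Continuous v₁) (hc₂ : Continuous v₂)
    (hb₁ : ∃ C, ∀ x, |v₁ x| ≤ C) (hb₂ : ∃ C, ∀ x, |v₂ x| ≤ C)
    (hint : Integrable (fun x => v₂ x - v₁ x))
    (L : ℝ) (hL : L = max (max 1 ((⨆ x, v₁ x) - 1)) (max 1 ((⨆ x, v₂ x) - 1)))
    (ψ : ℝ → ℝ) (hψ : ContDiff ℝ 1 ψ) (hψs : HasCompactSupport ψ)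
    (hsupp : tsupport ψ ⊆ Set.Ioi L) :
    Integrable (fun p : EuclideanSpace ℝ (Fin 3) × EuclideanSpace ℝ (Fin 3) =>
      ψ (v₂ p.1 + Real.sqrt (1 + ‖p.2‖ ^ 2)) - ψ (v₁ p.1 + Real.sqrt (1 + ‖p.2‖ ^ 2)) +
      ψ (v₂ p.1 - Real.sqrt (1 + ‖p.2‖ ^ 2)) - ψ (v₁ p.1 - Real.sqrt (1 + ‖p.2‖ ^ 2))) ∧
    Integrable (fun p : EuclideanSpace ℝ (Fin 3) × ℝ =>
      ψ p.2 * (4 * Real.pi * (p.2 - v₂ p.1) * Real.sqrt (max ((p.2 - v₂ p.1) ^ 2 - 1) 0) -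
        4 * Real.pi * (p.2 - v₁ p.1) * Real.sqrt (max ((p.2 - v₁ p.1) ^ 2 - 1) 0))) ∧
    (∫ x : EuclideanSpace ℝ (Fin 3), ∫ ξ : EuclideanSpace ℝ (Fin 3),
      (ψ (v₂ x + Real.sqrt (1 + ‖ξ‖ ^ 2)) - ψ (v₁ x + Real.sqrt (1 + ‖ξ‖ ^ 2)) +
       ψ (v₂ x - Real.sqrt (1 + ‖ξ‖ ^ 2)) - ψ (v₁ x - Real.sqrt (1 + ‖ξ‖ ^ 2)))) =
    ∫ x : EuclideanSpace ℝ (Fin 3), ∫ E : ℝ,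
      ψ E * (4 * Real.pi * (E - v₂ x) * Real.sqrt (max ((E - v₂ x) ^ 2 - 1) 0) -
        4 * Real.pi * (E - v₁ x) * Real.sqrt (max ((E - v₁ x) ^ 2 - 1) 0)) := by
  obtain ⟨K, hK⟩ := hψ.lipschitzWith_of_hasCompactSupport hψs one_ne_zero
  have hB₁ : Bornology.IsBounded (range v₁) :=
    isBounded_iff_forall_norm_le.2 (hb₁.imp fun _ hC => forall_mem_range.2 hC)
  have hB₂ : Bornology.IsBounded (range v₂) :=
    isBounded_iff_forall_norm_le.2 (hb₂.imp fun _ hC => forall_mem_range.2 hC)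
  have hs₁ := support_subset_Ioi_sub_one_of_iSup_sub_one_le hB₁.bddAbove
    (hL ▸ le_max_of_le_left (le_max_right _ _)) hsupp
  have hs₂ := support_subset_Ioi_sub_one_of_iSup_sub_one_le hB₂.bddAbove
    (hL ▸ le_max_of_le_right (le_max_right _ _)) hsupp
  have h₁ (x) (ξ : ℝ³) := comp_sub_sqrt_one_add_norm_sq_eq_zero (hs₁ x) ξ
  have h₂ (x) (ξ : ℝ³) := comp_sub_sqrt_one_add_norm_sq_eq_zero (hs₂ x) ξ
  simp only [h₁, h₂, add_zero, sub_zero]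
  have hG := integrable_comp_add_sqrt_one_add_norm_sq_sub (ν := volume (α := ℝ³))
    hc₁.measurable hc₂.measurable hB₁.bddBelow hB₂.bddBelow hint hK hψs
  exact ⟨hG, integrable_prod_mul_diracKernel_sub hc₁.measurable hc₂.measurable hψ.continuous hψs
    hs₁ hs₂ hG, integral_congr_ae (ae_of_all _ fun x =>
      integral_comp_add_sqrt_one_add_norm_sq_sub hψ.continuous hψs (hs₁ x) (hs₂ x))⟩
end

section
/- Let v₁, v₂ : ℝ³ → ℝ be measurable with |v₁(x)| ≤ V and |v₂(x)| ≤ V for all x, ∫_{ℝ³} |v₂ − v₁| dx < ∞, and let φ : ℝ → ℝ be C¹ with support contained in [−M, M], where M + V ≥ 1. Then, with ⟨ξ⟩ = (1 + ‖ξ‖²)^{1/2}, the integral ∫_{ℝ³}∫_{ℝ³} [ φ(v₂(x)+⟨ξ⟩) − φ(v₁(x)+⟨ξ⟩) + φ(v₂(x)−⟨ξ⟩) − φ(v₁(x)−⟨ξ⟩) ] dξ dx converges absolutely and is bounded in absolute value by 2 · (4π/3)((M+V)² − 1)^{3/2} · (sup_{t}|φ'(t)|) · ∫_{ℝ³} |v₂(x)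 − v₁(x)| dx. -/
/-!
By the mean value theorem `φ` is Lipschitz with constant `L = sup |φ'|`, so each of the two
pairs of branches `φ(v₂ ± ⟨ξ⟩) - φ(v₁ ± ⟨ξ⟩)` is bounded by `L |v₂ - v₁|`. Since `|vⱼ| ≤ V` and
`φ` vanishes outside `[-M, M]`, all four terms vanish once `⟨ξ⟩ > M + V`, that is outside the
ball `‖ξ‖ ≤ √((M + V)² - 1)`. The integrand is therefore dominated by the product
`2 L |v₂(x) - v₁(x)| · 1_{ball}(ξ)`, whose integral is the claimed bound by Fubini.
-/

open MeasureTheory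

section

variable {α β : Type*} [MeasurableSpace α] [MeasurableSpace β] {μ : Measure α} {ν : Measure β}
  [SFinite μ] [SFinite ν]

theorem integrable_and_abs_integral_le_of_norm_le_mul {f : α × β → ℝ} {g : α → ℝ} {h : β → ℝ}
    (hf : AEStronglyMeasurable f (μ.prod ν)) (hg : Integrable g μ) (hh : Integrable h ν)
    (hle : ∀ p, ‖f p‖ ≤ g p.1 * h p.2) :
    Integrable f (μ.prod ν) ∧ |∫ p, f p ∂μ.prod ν| ≤ (∫ x, g x ∂μ) * ∫ y, h y ∂ν := by
  have hgh : Integrable (fun p : α × β => g p.1 * h p.2) (μ.prod ν) := hg.mul_prod hh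
  have hfi : Integrable f (μ.prod ν) := hgh.mono' hf (.of_forall hle)
  refine ⟨hfi, ?_⟩
  calc |∫ p, f p ∂μ.prod ν| ≤ ∫ p, ‖f p‖ ∂μ.prod ν := norm_integral_le_integral_norm f
    _ ≤ ∫ p, g p.1 * h p.2 ∂μ.prod ν := integral_mono hfi.norm hgh hle
    _ = (∫ x, g x ∂μ) * ∫ y, h y ∂ν := integral_prod_mul g h

end

theorem abs_sub_le_iSup_abs_deriv_mul {φ : ℝ → ℝ} (hφ : ContDiff ℝ 1 φ)
    (hc : HasCompactSupport φ) (a b : ℝ) :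
    |φ a - φ b| ≤ (⨆ t, |deriv φ t|) * |a - b| := by
  obtain ⟨C, hC⟩ := hc.deriv.exists_bound_of_continuous (hφ.continuous_deriv le_rfl)
  have hle : ∀ t, |deriv φ t| ≤ ⨆ t, |deriv φ t| :=
    le_ciSup ⟨C, by rintro _ ⟨t, rfl⟩; exact hC t⟩
  simpa only [Real.norm_eq_abs] using
    Convex.norm_image_sub_le_of_norm_deriv_le (fun t _ => (hφ.differentiable one_ne_zero) t)
      (fun t _ => hle t) convex_univ (Set.mem_univ b) (Set.mem_univ a)

theorem eq_zero_of_lt_abs_of_tsupport_subset_Icc {φ : ℝ → ℝ} {M t : ℝ}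
    (hsupp : tsupport φ ⊆ Set.Icc (-M) M) (ht : M < |t|) : φ t = 0 :=
  image_eq_zero_of_notMem_tsupport fun h => ht.not_ge (abs_le.2 (hsupp h))

section

variable {X F : Type*} [NormedAddCommGroup F]

noncomputable def japaneseBracket (ξ : F) : ℝ := Real.sqrt (1 + ‖ξ‖ ^ 2)

theorem lt_japaneseBracket {c : ℝ} (hc : 0 ≤ c) {ξ : F} (hξ : Real.sqrt (c ^ 2 - 1) < ‖ξ‖) :
    c < japaneseBracket ξ := by
  rw [japaneseBracket, Real.lt_sqrt hc]
  have := (Real.sqrt_lt' ((Real.sqrt_nonneg _).trans_lt hξ)).1 hξ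
  linarith

/-- The integrand of `⟨ω, φ⟩` at `(x, ξ)`. -/
noncomputable def branchDifference (φ : ℝ → ℝ) (v₁ v₂ : X → ℝ) (p : X × F) : ℝ :=
  φ (v₂ p.1 + japaneseBracket p.2) - φ (v₁ p.1 + japaneseBracket p.2) +
    φ (v₂ p.1 - japaneseBracket p.2) - φ (v₁ p.1 - japaneseBracket p.2)

variable {φ : ℝ → ℝ} {v₁ v₂ : X → ℝ}

theorem abs_branchDifference_le {L : ℝ} (hφ : ∀ a b, |φ a - φ b| ≤ L * |a - b|) (p : X × F) :
    |branchDifference φ v₁ v₂ p| ≤ 2 * L * |v₂ p.1 - v₁ p.1| := by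
  have h_add := hφ (v₂ p.1 + japaneseBracket p.2) (v₁ p.1 + japaneseBracket p.2)
  have h_sub := hφ (v₂ p.1 - japaneseBracket p.2) (v₁ p.1 - japaneseBracket p.2)
  rw [add_sub_add_right_eq_sub] at h_add
  rw [sub_sub_sub_cancel_right] at h_sub
  calc |branchDifference φ v₁ v₂ p|
      ≤ |φ (v₂ p.1 + japaneseBracket p.2) - φ (v₁ p.1 + japaneseBracket p.2)| +
          |φ (v₂ p.1 - japaneseBracket p.2) - φ (v₁ p.1 - japaneseBracket p.2)| := by
        rw [branchDifference, add_sub_assoc]; exact abs_add_le _ _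
    _ ≤ 2 * L * |v₂ p.1 - v₁ p.1| := by linarith

theorem branchDifference_eq_zero {M V : ℝ} (hsupp : tsupport φ ⊆ Set.Icc (-M) M)
    (hb₁ : ∀ x, |v₁ x| ≤ V) (hb₂ : ∀ x, |v₂ x| ≤ V) {p : X × F}
    (hp : M + V < japaneseBracket p.2) : branchDifference φ v₁ v₂ p = 0 := by
  have hvanish (a : ℝ) (ha : |a| ≤ V) :
      φ (a + japaneseBracket p.2) = 0 ∧ φ (a - japaneseBracket p.2) = 0 := by
    rw [abs_le] at ha
    exact ⟨eq_zero_of_lt_abs_of_tsupport_subset_Icc hsupp (lt_abs.2 (.inl (by linarith))),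
      eq_zero_of_lt_abs_of_tsupport_subset_Icc hsupp (lt_abs.2 (.inr (by linarith)))⟩
  simp [branchDifference, hvanish _ (hb₁ p.1), hvanish _ (hb₂ p.1)]

theorem norm_branchDifference_le_indicator {M V L : ℝ} (hMV : 0 ≤ M + V)
    (hsupp : tsupport φ ⊆ Set.Icc (-M) M) (hφ : ∀ a b, |φ a - φ b| ≤ L * |a - b|)
    (hb₁ : ∀ x, |v₁ x| ≤ V) (hb₂ : ∀ x, |v₂ x| ≤ V) (p : X × F) :
    ‖branchDifference φ v₁ v₂ p‖ ≤ 2 * L * |v₂ p.1 - v₁ p.1| *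
      (Metric.closedBall 0 (Real.sqrt ((M + V) ^ 2 - 1))).indicator 1 p.2 := by
  by_cases hp : p.2 ∈ Metric.closedBall 0 (Real.sqrt ((M + V) ^ 2 - 1))
  · simpa [hp] using abs_branchDifference_le hφ p
  · have hfar := lt_japaneseBracket hMV (by simpa using hp)
    simp [hp, branchDifference_eq_zero hsupp hb₁ hb₂ hfar]

variable [MeasurableSpace X] [MeasurableSpace F] [OpensMeasurableSpace F]

theorem measurable_branchDifference (hφ : Continuous φ) (h₁ : Measurable v₁)
    (h₂ : Measurable v₂) : Measurable (branchDifference φ v₁ v₂ : X × F → ℝ) := by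
  have := hφ.measurable
  unfold branchDifference japaneseBracket
  fun_prop

end

/-- For measurable `v₁, v₂` bounded by `V` with integrable difference, and `φ` a `C¹`
function supported in `[−M, M]` with `M + V ≥ 1`, the phase-space integral over the four
eigenvalue branches converges absolutely and is bounded by
`2 (4π/3)((M+V)² − 1)^{3/2} (sup|φ'|) ∫|v₂ − v₁|`. -/
theorem stmt_9 (v₁ v₂ : EuclideanSpace ℝ (Fin 3) → ℝ) (V M : ℝ)
    (h₁ : Measurable v₁) (h₂ : Measurable v₂)
    (hb₁ : ∀ x, |v₁ x| ≤ V) (hb₂ : ∀ x, |v₂ x| ≤ V)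
    (hint : Integrable (fun x => v₂ x - v₁ x))
    (φ : ℝ → ℝ) (hφ : ContDiff ℝ 1 φ) (hsupp : tsupport φ ⊆ Set.Icc (-M) M)
    (hMV : 1 ≤ M + V) :
    Integrable (fun p : EuclideanSpace ℝ (Fin 3) × EuclideanSpace ℝ (Fin 3) =>
      φ (v₂ p.1 + Real.sqrt (1 + ‖p.2‖ ^ 2)) - φ (v₁ p.1 + Real.sqrt (1 + ‖p.2‖ ^ 2)) +
      φ (v₂ p.1 - Real.sqrt (1 + ‖p.2‖ ^ 2)) - φ (v₁ p.1 - Real.sqrt (1 + ‖p.2‖ ^ 2))) ∧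
    |∫ p : EuclideanSpace ℝ (Fin 3) × EuclideanSpace ℝ (Fin 3),
        (φ (v₂ p.1 + Real.sqrt (1 + ‖p.2‖ ^ 2)) - φ (v₁ p.1 + Real.sqrt (1 + ‖p.2‖ ^ 2)) +
         φ (v₂ p.1 - Real.sqrt (1 + ‖p.2‖ ^ 2)) - φ (v₁ p.1 - Real.sqrt (1 + ‖p.2‖ ^ 2)))| ≤
      2 * (4 * Real.pi / 3) * ((M + V) ^ 2 - 1) ^ ((3 : ℝ) / 2) *
        (⨆ t : ℝ, |deriv φ t|) * ∫ x, |v₂ x - v₁ x| := by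
  set L := ⨆ t : ℝ, |deriv φ t|
  set r := Real.sqrt ((M + V) ^ 2 - 1) with hr_def
  have hc : HasCompactSupport φ := isCompact_Icc.of_isClosed_subset (isClosed_tsupport φ) hsupp
  have hball : Integrable ((Metric.closedBall (0 : EuclideanSpace ℝ (Fin 3)) r).indicator 1) :=
    (integrableOn_const (C := (1 : ℝ)) measure_closedBall_lt_top.ne).integrable_indicator
      measurableSet_closedBall
  obtain ⟨hf, hbound⟩ := integrable_and_abs_integral_le_of_norm_le_mul
    (measurable_branchDifference hφ.continuous h₁ h₂).aestronglyMeasurable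
    (hint.abs.const_mul (2 * L)) hball
    (norm_branchDifference_le_indicator (by linarith) hsupp (abs_sub_le_iSup_abs_deriv_mul hφ hc)
      hb₁ hb₂)
  refine ⟨hf, hbound.trans_eq ?_⟩
  have hr : r ^ 3 = ((M + V) ^ 2 - 1) ^ ((3 : ℝ) / 2) := by
    rw [hr_def, Real.sqrt_eq_rpow, ← Real.rpow_mul_natCast (by nlinarith)]
    norm_num
  rw [integral_const_mul, integral_indicator_one measurableSet_closedBall, measureReal_def,
    EuclideanSpace.volume_closedBall_fin_three, ENNReal.toReal_mul, ENNReal.toReal_pow,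
    ENNReal.toReal_ofReal (Real.sqrt_nonneg _), ENNReal.toReal_ofReal (by positivity), hr]
  ring
end

section
/- Let g : ℝ³ → ℝ³ be continuously differentiable with ‖Dg(x)‖ ≤ √2 (operator norm) for every x, and let θ ∈ ℝ with |θ| < 2^{−1/2}; write φ_θ(x) = x + θ g(x) and J_θ(x) = det(I + θ Dg(x)). Then the map U_θ defined by (U_θ f)(x) = J_θ(x)^{1/2} f(φ_θ(x)) is a surjective linear isometry (unitary operator) of L²(ℝ³; ℂ⁴) onto itself. -/
/-!
Since `‖θ • Dg‖ ≤ |θ| √2 < 1`, the map `θ • g` is a contraction, so `φ_θ = id + θ • g` is a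
homeomorphism of `ℝ³`, and `J_θ > 0` because `t ↦ det (I + t θ Dg(x))` does not vanish on
`[0, 1]`. By the change of variables formula `φ_θ` pushes `J_θ dx` forward to `dx`. Hence
composition with `φ_θ` is a unitary `L²(dx) → L²(J_θ dx)` and multiplication by `J_θ^{1/2}` a
unitary `L²(J_θ dx) → L²(dx)`; `U_θ` is their composite.
-/

open MeasureTheory Set
open scoped NNReal ENNReal

namespace ContinuousLinearMap

variable {E : Type*} [NormedAddCommGroup E] [NormedSpace ℝ E]

theorem isUnit_id_add_of_norm_lt_one [CompleteSpace E] {u : E →L[ℝ] E} (hu : ‖u‖ < 1) :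
    IsUnit (ContinuousLinearMap.id ℝ E + u) := by
  by_contra h
  exact nonunits.subset_compl_ball h (by simpa [dist_eq_norm, ← one_def] using hu)

theorem det_id_add_pos_of_norm_lt_one [FiniteDimensional ℝ E] {u : E →L[ℝ] E} (hu : ‖u‖ < 1) :
    0 < (ContinuousLinearMap.id ℝ E + u).det := by
  have hne : ∀ t ∈ Icc (0 : ℝ) 1, (ContinuousLinearMap.id ℝ E + t • u).det ≠ 0 := fun t ht => by
    refine (LinearMap.isUnit_det _ ((isUnit_id_add_of_norm_lt_one ?_).map
      toLinearMapRingHom)).ne_zero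
    calc ‖t • u‖ ≤ ‖u‖ := by
          rw [norm_smul, Real.norm_of_nonneg ht.1]
          exact mul_le_of_le_one_left (norm_nonneg u) ht.2
      _ < 1 := hu
  by_contra! hle
  have hcont : ContinuousOn (fun t : ℝ => (ContinuousLinearMap.id ℝ E + t • u).det) (Icc 0 1) :=
    (continuous_det.comp (by fun_prop)).continuousOn
  obtain ⟨t, ht, h0⟩ :=
    intermediate_value_Icc' zero_le_one hcont ⟨by simpa using hle, by simp [det]⟩
  exact hne t ht h0

end ContinuousLinearMap

theorem LipschitzWith.exists_homeomorph_eq_id_add {𝕜 E : Type*} [NontriviallyNormedField 𝕜]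
    [NormedAddCommGroup E] [NormedSpace 𝕜 E] [CompleteSpace E] {u : E → E} {K : ℝ≥0}
    (hu : LipschitzWith K u) (hK : K < 1) : ∃ Φ : E ≃ₜ E, ⇑Φ = fun x => x + u x := by
  have hΦ : ApproximatesLinearOn (fun x => x + u x)
      (ContinuousLinearEquiv.refl 𝕜 E : E →L[𝕜] E) univ K := by
    apply LipschitzOnWith.approximatesLinearOn
    convert hu.lipschitzOnWith (s := univ)
    ext x
    simp
  refine ⟨hΦ.toHomeomorph _ ?_, rfl⟩
  rcases subsingleton_or_nontrivial E with hE | hE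
  · exact Or.inl hE
  · exact Or.inr (by simpa using hK)

theorem Homeomorph.measurePreserving_withDensity_abs_det {E : Type*} [NormedAddCommGroup E]
    [NormedSpace ℝ E] [FiniteDimensional ℝ E] [MeasurableSpace E] [BorelSpace E]
    (μ : Measure E) [μ.IsAddHaarMeasure] (Φ : E ≃ₜ E) {Φ' : E → E →L[ℝ] E}
    (hΦ' : ∀ x, HasFDerivAt Φ (Φ' x) x) :
    MeasurePreserving Φ (μ.withDensity fun x => ENNReal.ofReal |(Φ' x).det|) μ := by
  refine ⟨Φ.continuous.measurable, ?_⟩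
  simpa [Φ.surjective.range_eq] using map_withDensity_abs_det_fderiv_eq_addHaar μ
    nullMeasurableSet_univ (fun x _ => (hΦ' x).hasFDerivWithinAt) Φ.injective.injOn

theorem exists_homeomorph_eq_id_add_measurePreserving {E : Type*} [NormedAddCommGroup E]
    [NormedSpace ℝ E] [FiniteDimensional ℝ E] [MeasurableSpace E] [BorelSpace E]
    (μ : Measure E) [μ.IsAddHaarMeasure] {u : E → E} {u' : E → E →L[ℝ] E} {K : ℝ≥0}
    (hu : ∀ x, HasFDerivAt u (u' x) x) (hu' : ∀ x, ‖u' x‖₊ ≤ K) (hK : K < 1) :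
    ∃ Φ : E ≃ₜ E, ⇑Φ = (fun x => x + u x) ∧ MeasurePreserving Φ
      (μ.withDensity fun x => ENNReal.ofReal (ContinuousLinearMap.id ℝ E + u' x).det) μ := by
  have hlip : LipschitzWith K u := lipschitzOnWith_univ.1 <|
    convex_univ.lipschitzOnWith_of_nnnorm_hasFDerivWithin_le
      (fun x _ => (hu x).hasFDerivWithinAt) fun x _ => hu' x
  obtain ⟨Φ, hΦ⟩ := hlip.exists_homeomorph_eq_id_add (𝕜 := ℝ) hK
  have hΦ' : ∀ x, HasFDerivAt Φ (ContinuousLinearMap.id ℝ E + u' x) x := fun x =>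
    hΦ ▸ (hasFDerivAt_id x).add (hu x)
  refine ⟨Φ, hΦ, ?_⟩
  convert Φ.measurePreserving_withDensity_abs_det μ hΦ' using 4 with x
  rw [abs_of_pos (ContinuousLinearMap.det_id_add_pos_of_norm_lt_one ((hu' x).trans_lt hK))]

namespace MeasureTheory

variable {α β 𝕜 F : Type*} [MeasurableSpace α] [MeasurableSpace β] {μ : Measure α}
  {ν : Measure β} [RCLike 𝕜] [NormedAddCommGroup F] [NormedSpace 𝕜 F] {p : ℝ≥0∞} {w : α → 𝕜}

theorem eLpNorm_smul_eq_eLpNorm_withDensity (hw : Measurable w) (hp : p ≠ ∞) (f : α → F) :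
    eLpNorm (w • f) p μ = eLpNorm f p (μ.withDensity fun x => ‖w x‖ₑ ^ p.toReal) := by
  rcases eq_or_ne p 0 with rfl | hp0
  · simp
  simp only [eLpNorm_eq_lintegral_rpow_enorm_toReal hp0 hp]
  rw [lintegral_withDensity_eq_lintegral_mul_non_measurable _ (by fun_prop)
    (ae_of_all _ fun x => ENNReal.rpow_lt_top_of_nonneg ENNReal.toReal_nonneg enorm_ne_top)]
  simp [enorm_smul, ENNReal.mul_rpow_of_nonneg _ _ ENNReal.toReal_nonneg]

theorem absolutelyContinuous_withDensity_enorm_rpow (hw : Measurable w)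
    (hw0 : ∀ᵐ x ∂μ, w x ≠ 0) (p : ℝ≥0∞) :
    μ ≪ μ.withDensity fun x => ‖w x‖ₑ ^ p.toReal :=
  withDensity_absolutelyContinuous' (by fun_prop) (hw0.mono fun x hx => by simp [hx])

theorem MemLp.smul_of_withDensity (hw : Measurable w) (hw0 : ∀ᵐ x ∂μ, w x ≠ 0) (hp : p ≠ ∞)
    {f : α → F} (hf : MemLp f p (μ.withDensity fun x => ‖w x‖ₑ ^ p.toReal)) :
    MemLp (w • f) p μ := by
  refine ⟨hw.aestronglyMeasurable.smul
    (hf.1.mono_ac (absolutelyContinuous_withDensity_enorm_rpow hw hw0 p)), ?_⟩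
  rw [eLpNorm_smul_eq_eLpNorm_withDensity hw hp]
  exact hf.2

theorem MemLp.inv_smul_withDensity (hw : Measurable w) (hw0 : ∀ᵐ x ∂μ, w x ≠ 0) (hp : p ≠ ∞)
    {f : α → F} (hf : MemLp f p μ) :
    MemLp (w⁻¹ • f) p (μ.withDensity fun x => ‖w x‖ₑ ^ p.toReal) := by
  refine ⟨(hw.inv.aestronglyMeasurable.smul hf.1).mono_ac
    (withDensity_absolutelyContinuous _ _), ?_⟩
  have : w • w⁻¹ • f =ᵐ[μ] f := hw0.mono fun x hx => smul_inv_smul₀ hx (f x)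
  rw [← eLpNorm_smul_eq_eLpNorm_withDensity hw hp, eLpNorm_congr_ae this]
  exact hf.2

namespace Lp

variable [Fact (1 ≤ p)]

noncomputable def smulWeightₗᵢ (hw : Measurable w) (hw0 : ∀ᵐ x ∂μ, w x ≠ 0) (hp : p ≠ ∞) :
    Lp F p (μ.withDensity fun x => ‖w x‖ₑ ^ p.toReal) →ₗᵢ[𝕜] Lp F p μ where
  toFun f := ((Lp.memLp f).smul_of_withDensity hw hw0 hp).toLp (w • f)
  map_add' f g := by
    rw [← MemLp.toLp_add]
    refine MemLp.toLp_congr _ _ ?_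
    filter_upwards [(absolutelyContinuous_withDensity_enorm_rpow hw hw0 p).ae_le
      (Lp.coeFn_add f g)] with x hx
    simp only [Pi.smul_apply', hx, Pi.add_apply, smul_add]
  map_smul' c f := by
    rw [RingHom.id_apply, ← MemLp.toLp_const_smul]
    refine MemLp.toLp_congr _ _ ?_
    filter_upwards [(absolutelyContinuous_withDensity_enorm_rpow hw hw0 p).ae_le
      (Lp.coeFn_smul c f)] with x hx
    simp [hx, smul_comm (w x) c]
  norm_map' f := by
    rw [LinearMap.coe_mk, AddHom.coe_mk, Lp.norm_toLp, Lp.norm_def,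
      eLpNorm_smul_eq_eLpNorm_withDensity hw hp]

variable (hw : Measurable w) (hw0 : ∀ᵐ x ∂μ, w x ≠ 0) (hp : p ≠ ∞)

theorem coeFn_smulWeightₗᵢ (f : Lp F p (μ.withDensity fun x => ‖w x‖ₑ ^ p.toReal)) :
    smulWeightₗᵢ hw hw0 hp f =ᵐ[μ] w • ⇑f :=
  MemLp.coeFn_toLp ((Lp.memLp f).smul_of_withDensity hw hw0 hp)

theorem smulWeightₗᵢ_surjective : Function.Surjective (smulWeightₗᵢ (F := F) hw hw0 hp) := by
  intro f
  have hf := (Lp.memLp f).inv_smul_withDensity hw hw0 hp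
  refine ⟨hf.toLp _, Lp.ext ?_⟩
  filter_upwards [coeFn_smulWeightₗᵢ hw hw0 hp (hf.toLp _),
    (absolutelyContinuous_withDensity_enorm_rpow hw hw0 p).ae_le hf.coeFn_toLp, hw0]
    with x h1 h2 hx
  simp [h1, h2, hx]

omit [Fact (1 ≤ p)] in
theorem compMeasurePreserving_surjective (φ : α ≃ᵐ β) (hφ : MeasurePreserving φ μ ν) :
    Function.Surjective (compMeasurePreserving φ hφ : Lp F p ν → Lp F p μ) := by
  intro f
  refine ⟨compMeasurePreserving φ.symm (hφ.symm φ) f, Lp.ext ?_⟩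
  filter_upwards [coeFn_compMeasurePreserving (compMeasurePreserving φ.symm (hφ.symm φ) f) hφ,
    hφ.quasiMeasurePreserving.ae_eq (coeFn_compMeasurePreserving f (hφ.symm φ))] with x h1 h2
  rw [h1, h2]
  simp

end Lp

theorem exists_linearIsometry_surjective_eq_smul_comp [Fact (1 ≤ p)] (φ : α ≃ᵐ β)
    (hw : Measurable w) (hw0 : ∀ᵐ x ∂μ, w x ≠ 0) (hp : p ≠ ∞)
    (hφ : MeasurePreserving φ (μ.withDensity fun x => ‖w x‖ₑ ^ p.toReal) ν) :
    ∃ U : Lp F p ν →ₗᵢ[𝕜] Lp F p μ,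
      Function.Surjective U ∧ ∀ f, U f =ᵐ[μ] fun x => w x • f (φ x) := by
  refine ⟨(Lp.smulWeightₗᵢ (F := F) hw hw0 hp).comp (Lp.compMeasurePreservingₗᵢ 𝕜 φ hφ),
    (Lp.smulWeightₗᵢ_surjective hw hw0 hp).comp (Lp.compMeasurePreserving_surjective φ hφ),
    fun f => ?_⟩
  filter_upwards [Lp.coeFn_smulWeightₗᵢ hw hw0 hp (Lp.compMeasurePreservingₗᵢ 𝕜 φ hφ f),
    (absolutelyContinuous_withDensity_enorm_rpow hw hw0 p).ae_le
      (Lp.coeFn_compMeasurePreserving f hφ)] with x h1 h2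
  rw [LinearIsometry.coe_comp, Function.comp_apply, h1, Pi.smul_apply']
  exact congrArg (w x • ·) h2

end MeasureTheory

/-- For `g : ℝ³ → ℝ³` a `C¹` vector field with `‖Dg(x)‖ ≤ √2` and `|θ| < 2^{−1/2}` real,
the distortion `(U_θ f)(x) = J_θ(x)^{1/2} f(x + θ g(x))`, with
`J_θ(x) = det(I + θ Dg(x))`, defines a surjective linear isometry (unitary operator) of
`L²(ℝ³; ℂ⁴)` onto itself. -/
theorem stmt_16 (g : EuclideanSpace ℝ (Fin 3) → EuclideanSpace ℝ (Fin 3))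
    (hg : ContDiff ℝ 1 g) (hbd : ∀ x, ‖fderiv ℝ g x‖ ≤ Real.sqrt 2)
    (θ : ℝ) (hθ : |θ| < (Real.sqrt 2)⁻¹) :
    ∃ U : Lp (EuclideanSpace ℂ (Fin 4)) 2
            (volume : Measure (EuclideanSpace ℝ (Fin 3))) →ₗᵢ[ℂ]
          Lp (EuclideanSpace ℂ (Fin 4)) 2
            (volume : Measure (EuclideanSpace ℝ (Fin 3))),
      Function.Surjective U ∧
      ∀ f : Lp (EuclideanSpace ℂ (Fin 4)) 2
              (volume : Measure (EuclideanSpace ℝ (Fin 3))),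
        ⇑(U f) =ᵐ[volume] fun x =>
          ((Real.sqrt ((ContinuousLinearMap.id ℝ (EuclideanSpace ℝ (Fin 3)) +
              θ • fderiv ℝ g x).det) : ℝ) : ℂ) • f (x + θ • g x) := by
  set J := fun x => (ContinuousLinearMap.id ℝ (EuclideanSpace ℝ (Fin 3)) + θ • fderiv ℝ g x).det
  have hgd : Differentiable ℝ g := hg.differentiable one_ne_zero
  have hK : ‖θ‖₊ * NNReal.sqrt 2 < 1 := by
    rw [← NNReal.coe_lt_coe, NNReal.coe_mul, coe_nnnorm, Real.coe_sqrt, NNReal.coe_ofNat,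
      NNReal.coe_one, Real.norm_eq_abs]
    calc |θ| * √2 < (√2)⁻¹ * √2 := by gcongr
      _ = 1 := inv_mul_cancel₀ (by positivity)
  have hsmall : ∀ x, ‖θ • fderiv ℝ g x‖₊ ≤ ‖θ‖₊ * NNReal.sqrt 2 := fun x => by
    rw [nnnorm_smul]
    gcongr
    rw [← NNReal.coe_le_coe, coe_nnnorm, Real.coe_sqrt, NNReal.coe_ofNat]
    exact hbd x
  have hJ : ∀ x, 0 < J x := fun x =>
    ContinuousLinearMap.det_id_add_pos_of_norm_lt_one ((hsmall x).trans_lt hK)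
  have hJc : Continuous J :=
    ContinuousLinearMap.continuous_det.comp
      (continuous_const.add ((hg.continuous_fderiv one_ne_zero).const_smul θ))
  obtain ⟨Φ, hΦ, hmp⟩ := exists_homeomorph_eq_id_add_measurePreserving volume
    (fun x => (hgd x).hasFDerivAt.const_smul θ) hsmall hK
  have hdens : (fun x => ENNReal.ofReal (J x)) =
      fun x => ‖((√(J x) : ℝ) : ℂ)‖ₑ ^ (2 : ℝ≥0∞).toReal := funext fun x => by
    rw [← ofReal_norm, Complex.norm_real, Real.norm_of_nonneg (Real.sqrt_nonneg _),
      ENNReal.toReal_ofNat, ENNReal.ofReal_rpow_of_nonneg (Real.sqrt_nonneg _) zero_le_two,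
      Real.rpow_two, Real.sq_sqrt (hJ x).le]
  obtain ⟨U, hU, hUf⟩ := exists_linearIsometry_surjective_eq_smul_comp
    (F := EuclideanSpace ℂ (Fin 4)) (p := 2) Φ.toMeasurableEquiv
    (by fun_prop : Measurable fun x => ((√(J x) : ℝ) : ℂ))
    (ae_of_all _ fun x => by simpa using (Real.sqrt_pos.2 (hJ x)).ne') ENNReal.ofNat_ne_top
    (hdens ▸ hmp)
  exact ⟨U, hU, fun f => by simpa [hΦ] using hUf f⟩
end

section
/- For every E₀ ∈ ℝ there exist constants a, b, C₀ > 0 with the following property: for all real numbers α, β with |α − (E₀+1)| ≤ b/4 and |β − 1| ≤ 1/4, for all λ ≥ 1, and for all E ∈ ℂ with Re E ∈ [E₀+1−2b, E₀+1+2b] and Im E ∈ (−2a, a] but such that either |Re E − (E₀+1)| > b or Im E ≤ −a, one has |exp(i λ β (α − E) − λ (α − E)²/2)| ≤ e^{−C₀ λ}. -/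
/-!
The real part of the exponent is `λ (β Im E - (α - Re E)² / 2 + (Im E)² / 2)`; take `a = 1/16`,
`b = 1`. Far from `E₀ + 1` horizontally, `|α - Re E| ≥ 3/4` so `(α - Re E)² / 2 ≥ 9/32` beats the
at most `5/64 + 1/128` from the imaginary part; below the window, `β Im E ≤ -3/64` beats
`(Im E)² / 2 ≤ 1/128`. Either way the bracket is at most `-5/128`.
-/

open Complex

lemma re_fbi_exponent (lam β α : ℝ) (E : ℂ) :
    (I * lam * β * (α - E) - lam * (α - E) ^ 2 / 2).re =
      lam * (β * E.im - (α - E.re) ^ 2 / 2 + E.im ^ 2 / 2) := by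
  simp only [sub_re, sub_im, mul_re, mul_im, div_ofNat_re, pow_two, I_re, I_im,
    ofReal_re, ofReal_im]
  ring

lemma fbi_phase_le_of_far_re {β x y : ℝ} (hβ₀ : 0 ≤ β) (hβ : β ≤ 5 / 4) (hx : 3 / 4 ≤ |x|)
    (hy₀ : -(1 / 8) < y) (hy : y ≤ 1 / 16) :
    β * y - x ^ 2 / 2 + y ^ 2 / 2 ≤ -(5 / 128) := by
  have hx2 : 9 / 16 ≤ x ^ 2 := by nlinarith [sq_abs x]
  have hβy : β * y ≤ 5 / 64 := by
    rcases le_or_gt 0 y with hy' | hy'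
    · nlinarith
    · nlinarith
  nlinarith

lemma fbi_phase_le_of_im_le {β x y : ℝ} (hβ : 3 / 4 ≤ β) (hy₀ : -(1 / 8) < y)
    (hy : y ≤ -(1 / 16)) :
    β * y - x ^ 2 / 2 + y ^ 2 / 2 ≤ -(5 / 128) := by
  nlinarith [sq_nonneg x]

/-- Exponential smallness of the FBI test functions off the window `W`: for every `E₀ ∈ ℝ`
there are `a, b, C₀ > 0` such that for all real `α, β` with `|α − (E₀+1)| ≤ b/4`,
`|β − 1| ≤ 1/4`, all `λ ≥ 1`, and all `E ∈ ℂ` with `Re E ∈ [E₀+1−2b, E₀+1+2b]` and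
`Im E ∈ (−2a, a]` but with `|Re E − (E₀+1)| > b` or `Im E ≤ −a`, one has
`|exp(iλβ(α − E) − λ(α − E)²/2)| ≤ e^{−C₀λ}`. -/
theorem stmt_19 (E₀ : ℝ) :
    ∃ a : ℝ, 0 < a ∧ ∃ b : ℝ, 0 < b ∧ ∃ C₀ : ℝ, 0 < C₀ ∧
      ∀ α β : ℝ, |α - (E₀ + 1)| ≤ b / 4 → |β - 1| ≤ 1 / 4 →
      ∀ lam : ℝ, 1 ≤ lam →
      ∀ E : ℂ, E.re ∈ Set.Icc (E₀ + 1 - 2 * b) (E₀ + 1 + 2 * b) →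
        E.im ∈ Set.Ioc (-(2 * a)) a →
        (b < |E.re - (E₀ + 1)| ∨ E.im ≤ -a) →
        ‖Complex.exp (Complex.I * (lam : ℂ) * (β : ℂ) * ((α : ℂ) - E) -
          (lam : ℂ) * ((α : ℂ) - E) ^ 2 / 2)‖ ≤ Real.exp (-C₀ * lam) := by
  refine ⟨1 / 16, by norm_num, 1, by norm_num, 5 / 128, by norm_num, ?_⟩
  intro α β hα hβ lam hlam E _ ⟨him₀, him⟩ hout
  rw [Complex.norm_exp, re_fbi_exponent, Real.exp_le_exp, mul_comm]
  refine mul_le_mul_of_nonneg_right ?_ (by linarith)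
  obtain ⟨hβ₀, hβ₁⟩ := abs_le.mp hβ
  rcases hout with hfar | hlow
  · have hdist : 3 / 4 ≤ |α - E.re| := by
      have := abs_sub_le E.re α (E₀ + 1)
      rw [abs_sub_comm E.re α] at this
      linarith
    exact fbi_phase_le_of_far_re (by linarith) (by linarith) hdist (by linarith) him
  · exact fbi_phase_le_of_im_le (by linarith) (by linarith) hlow
end
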